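/- arXiv:1108.4999 — 2 statements merged into one kernel-verified Lean document; each statement's English description precedes it below -/
import Mathlib

section
/- Let V be a finite-dimensional complex vector space with nondegenerate symmetric bilinear form (·,·), and let s : V → V be self-adjoint with rank(s) = 2 and im(s) ⊆ ker(s). Define a bilinear form ⟨·,·⟩ on U = im(s) by ⟨s v, u⟩ = (v, u) for v ∈ V, u ∈ U. Then ⟨·,·⟩ is well-defined, symmetric, and nondegenerate on U. -/
open Module

/-- Let `V` be a finite-dimensional complex vector space with a
nondegenerate symmetric bilinear form `B`, and `s : V → V` self-adjoint with
`rank s = 2` and `im(s) ⊆ ker(s)`.  Then the prescription `⟨s v, u⟩ = B v u` defines a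
(well-defined) symmetric nondegenerate bilinear form on `U = im(s)`. -/
theorem induced_form_on_image (V : Type*) [AddCommGroup V] [Module ℂ V]
    [FiniteDimensional ℂ V] (B : LinearMap.BilinForm ℂ V)
    (hB_nondeg : B.Nondegenerate)
    (hB_symm : ∀ v w, B v w = B w v)
    (s : V →ₗ[ℂ] V)
    (hs_selfadj : ∀ v w, B (s v) w = B v (s w))
    (hrank : finrank ℂ (LinearMap.range s) = 2)
    (hrange : LinearMap.range s ≤ LinearMap.ker s) :
    ∃ T : LinearMap.BilinForm ℂ ↥(LinearMap.range s),
      (∀ (v : V) (u : ↥(LinearMap.range s)),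
          T ⟨s v, LinearMap.mem_range_self s v⟩ u = B v (u : V)) ∧
      (∀ u u', T u u' = T u' u) ∧
      T.Nondegenerate := by
  -- a linear right inverse of the range restriction of `s`
  obtain ⟨g, hg⟩ := s.rangeRestrict.exists_rightInverse_of_surjective
    (LinearMap.range_eq_top.mpr s.surjective_rangeRestrict)
  have hsg : ∀ u : ↥(LinearMap.range s), s (g u) = (u : V) := by
    intro u
    have := congrArg (fun f => ((f u : ↥(LinearMap.range s)) : V)) hg
    simpa using this
  -- elements of the kernel of `s` are B-orthogonal to the range of `s`
  have hker : ∀ x, s x = 0 → ∀ u : ↥(LinearMap.range s), B x (u : V) = 0 := by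
    intro x hx u
    obtain ⟨w, hw⟩ := u.2
    rw [← hw, ← hs_selfadj, hx, map_zero, LinearMap.zero_apply]
  refine ⟨B.compl₁₂ g (LinearMap.range s).subtype, ?_, ?_, ?_⟩
  · intro v u
    have h1 : s (g ⟨s v, LinearMap.mem_range_self s v⟩ - v) = 0 := by
      simp [map_sub, hsg ⟨s v, LinearMap.mem_range_self s v⟩]
    have := hker _ h1 u
    simp only [LinearMap.compl₁₂_apply, Submodule.coe_subtype]
    rw [map_sub, LinearMap.sub_apply] at this
    linear_combination this
  · intro u u'
    simp only [LinearMap.compl₁₂_apply, Submodule.coe_subtype]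
    calc B (g u) (u' : V) = B (g u) (s (g u')) := by rw [hsg]
      _ = B (s (g u)) (g u') := (hs_selfadj _ _).symm
      _ = B (u : V) (g u') := by rw [hsg]
      _ = B (g u') (u : V) := hB_symm _ _
  · have hL : ∀ u : ↥(LinearMap.range s),
        (∀ u', B.compl₁₂ g (LinearMap.range s).subtype u u' = 0) → u = 0 := by
      intro u hu
      have hgk : s (g u) = 0 := by
        apply hB_nondeg.1
        intro w
        have h := hu ⟨s w, LinearMap.mem_range_self s w⟩
        simp only [LinearMap.compl₁₂_apply, Submodule.coe_subtype] at h
        rw [hs_selfadj]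
        exact h
      have : (u : V) = 0 := by rw [← hsg u, hgk]
      exact Subtype.ext this
    refine ⟨hL, fun u hu => hL u fun u' => ?_⟩
    have hu' := hu u'
    simp only [LinearMap.compl₁₂_apply, Submodule.coe_subtype] at hu' ⊢
    rw [← hsg u', ← hs_selfadj, hsg u, hB_symm]
    exact hu'
end

section
/- Let x be an n×n complex nilpotent matrix with Jordan type the partition [b_1,…,b_n] (parts weakly decreasing, possibly zero, summing to n). For every s ≥ 1, the rank of the sn×sn block upper bidiagonal matrix with x on the diagonal blocks and the identity on the superdiagonal blocks equals sn − Σ_{j=1}^{n} min(b_j, s). -/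
open Module

noncomputable section
open scoped Classical

/-- The nilpotent Jordan matrix of type `b = [b 0, b 1, …]`: it has `1`s on the
superdiagonal except at the block boundaries, which occur at the partial sums of `b`. -/
def jordanMat (n : ℕ) (b : ℕ → ℕ) : Matrix (Fin n) (Fin n) ℂ :=
  Matrix.of fun i j =>
    if ((j : ℕ) = (i : ℕ) + 1 ∧ ∀ k, (∑ l ∈ Finset.range k, b l) ≠ (i : ℕ) + 1)
    then 1 else 0

/-- The `sn × sn` block upper bidiagonal matrix with `x` on the diagonal blocks and
identity blocks on the superdiagonal. -/
def blockBidiag (n s : ℕ) (x : Matrix (Fin n) (Fin n) ℂ) :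
    Matrix (Fin s × Fin n) (Fin s × Fin n) ℂ :=
  Matrix.of fun p q =>
    if q.1 = p.1 then x p.2 q.2
    else if (q.1 : ℕ) = (p.1 : ℕ) + 1 then (if p.2 = q.2 then 1 else 0) else 0

/-! ### Auxiliary lemmas -/

lemma RBB.partial_sum_mono (b : ℕ → ℕ) : Monotone (fun k => ∑ l ∈ Finset.range k, b l) :=
  fun _ _ h => Finset.sum_le_sum_of_subset (Finset.range_subset_range.2 h)

lemma RBB.partial_sum_stab (n : ℕ) (b : ℕ → ℕ) (hb_zero : ∀ i, n ≤ i → b i = 0)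
    (hb_sum : ∑ i ∈ Finset.range n, b i = n) {k : ℕ} (hk : n ≤ k) :
    ∑ l ∈ Finset.range k, b l = n := by
  rw [← Finset.sum_range_add_sum_Ico b hk, hb_sum, Finset.sum_eq_zero, add_zero]
  intro i hi
  exact hb_zero i (Finset.mem_Ico.1 hi).1

/-- Counting the indices covered by a block boundary within distance `s`. -/
lemma RBB.count_lemma (n s : ℕ) (b : ℕ → ℕ)
    (hb_zero : ∀ i, n ≤ i → b i = 0)
    (hb_sum : ∑ i ∈ Finset.range n, b i = n) :
    ((Finset.range n).filter
      (fun i => ∃ k, i < ∑ l ∈ Finset.range k, b l ∧ ∑ l ∈ Finset.range k, b l ≤ i + s)).card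
      = ∑ j ∈ Finset.range n, min (b j) s := by
  set S : ℕ → ℕ := fun k => ∑ l ∈ Finset.range k, b l with hS
  have hmono : Monotone S := RBB.partial_sum_mono b
  have hSn : S n = n := hb_sum
  have hstab : ∀ k, n ≤ k → S k = n := fun k hk => RBB.partial_sum_stab n b hb_zero hb_sum hk
  have hsucc : ∀ j, S (j + 1) = S j + b j := fun j => Finset.sum_range_succ b j
  have hkey : (Finset.range n).filter
      (fun i => ∃ k, i < S k ∧ S k ≤ i + s)
      = (Finset.range n).biUnion (fun j => Finset.Ico (max (S j) (S (j+1) - s)) (S (j+1))) := by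
    ext i
    simp only [Finset.mem_filter, Finset.mem_biUnion, Finset.mem_range, Finset.mem_Ico,
      max_le_iff, lt_min_iff, le_max_iff]
    constructor
    · rintro ⟨hin, k, hk1, hk2⟩
      have hex : ∃ m, i < S m := ⟨k, hk1⟩
      have hK : i < S (Nat.find hex) := Nat.find_spec hex
      have hK0 : Nat.find hex ≠ 0 := by
        intro h
        rw [h] at hK
        simp [hS] at hK
      obtain ⟨j, hj⟩ : ∃ j, Nat.find hex = j + 1 := ⟨Nat.find hex - 1, by omega⟩
      have hj1 : ¬ i < S j := Nat.find_min hex (by omega)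
      have hKk : Nat.find hex ≤ k := Nat.find_min' hex hk1
      have hjk : S (j+1) ≤ S k := hj ▸ hmono hKk
      have hjn : j < n := by
        by_contra h
        exact hj1 (hstab j (by omega) ▸ hin)
      exact ⟨j, hjn, ⟨by omega, by omega⟩, hj ▸ hK⟩
    · rintro ⟨j, hjn, ⟨h1, h2⟩, h3⟩
      have : S (j+1) ≤ n := hSn ▸ hmono (by omega)
      exact ⟨by omega, ⟨j+1, h3, by omega⟩⟩
  rw [hkey, Finset.card_biUnion]
  · refine Finset.sum_congr rfl fun j _ => ?_
    rw [Nat.card_Ico, hsucc j]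
    omega
  · intro j hj j' hj' hne
    simp only [Finset.disjoint_left, Finset.mem_Ico, max_le_iff]
    rintro a ⟨⟨ha1, _⟩, ha2⟩ ⟨⟨hb1, _⟩, hb2⟩
    rcases Nat.lt_or_ge j j' with h | h
    · exact absurd (lt_of_lt_of_le ha2 (hmono h)) (not_lt.2 hb1)
    · have hlt : j' < j := lt_of_le_of_ne h (Ne.symm hne)
      exact absurd (lt_of_lt_of_le hb2 (hmono hlt)) (not_lt.2 ha1)

/-- Entries of powers of the Jordan matrix. -/
lemma RBB.jordan_pow_apply (n : ℕ) (b : ℕ → ℕ)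
    (hb_sum : ∑ i ∈ Finset.range n, b i = n) :
    ∀ s : ℕ, 1 ≤ s → ∀ i j : Fin n,
      (jordanMat n b ^ s) i j =
        if ((j : ℕ) = (i : ℕ) + s ∧
            ∀ k, ¬((i : ℕ) < ∑ l ∈ Finset.range k, b l ∧ ∑ l ∈ Finset.range k, b l ≤ (i : ℕ) + s))
        then 1 else 0 := by
  intro s
  induction s with
  | zero => omega
  | succ s ih =>
    intro _ i j
    rcases Nat.eq_or_lt_of_le (Nat.one_le_iff_ne_zero.2 (Nat.succ_ne_zero s)) with h1 | h1
    · -- s + 1 = 1, i.e. s = 0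
      have hs0 : s = 0 := by omega
      subst hs0
      rw [pow_one]
      show (if ((j : ℕ) = (i : ℕ) + 1 ∧ ∀ k, (∑ l ∈ Finset.range k, b l) ≠ (i : ℕ) + 1) then (1:ℂ) else 0) = _
      congr 1
      apply propext
      constructor
      · rintro ⟨hj, hk⟩
        exact ⟨hj, fun k hcon => hk k (by omega)⟩
      · rintro ⟨hj, hk⟩
        exact ⟨hj, fun k hcon => hk k (by omega)⟩
    · have hs1 : 1 ≤ s := by omega
      rw [pow_succ']
      rw [Matrix.mul_apply]
      by_cases hin : (i : ℕ) + 1 < n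
      · set m0 : Fin n := ⟨(i : ℕ) + 1, hin⟩ with hm0
        rw [Finset.sum_eq_single m0]
        · rw [ih hs1 m0 j]
          show (if ((m0 : ℕ) = (i : ℕ) + 1 ∧ ∀ k, (∑ l ∈ Finset.range k, b l) ≠ (i : ℕ) + 1) then (1:ℂ) else 0) * _ = _
          by_cases hq : ∀ k, (∑ l ∈ Finset.range k, b l) ≠ (i : ℕ) + 1
          · rw [if_pos ⟨rfl, hq⟩, one_mul]
            congr 1
            apply propext
            constructor
            · rintro ⟨hj, hk⟩
              refine ⟨by simp [hm0] at hj ⊢; omega, fun k hcon => ?_⟩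
              rcases Nat.eq_or_lt_of_le (Nat.succ_le_of_lt hcon.1) with h | h
              · exact hq k h.symm
              · exact hk k ⟨by simp [hm0]; omega, by simp [hm0]; omega⟩
            · rintro ⟨hj, hk⟩
              refine ⟨by simp [hm0]; omega, fun k hcon => ?_⟩
              simp only [hm0] at hcon
              exact hk k ⟨by omega, by omega⟩
          · rw [if_neg (fun hc => hq hc.2), zero_mul]
            push_neg at hq
            obtain ⟨k, hk⟩ := hq
            rw [if_neg]
            rintro ⟨-, hall⟩
            exact hall k ⟨by omega, by omega⟩
        · intro m _ hm
          show (if ((m : ℕ) = (i : ℕ) + 1 ∧ _) then (1:ℂ) else 0) * _ = 0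
          rw [if_neg, zero_mul]
          rintro ⟨hv, -⟩
          exact hm (Fin.ext (by simp [hm0, hv]))
        · intro h
          exact absurd (Finset.mem_univ m0) h
      · -- i + 1 ≥ n : row i of jordanMat is zero, and the RHS condition fails
        rw [Finset.sum_eq_zero, if_neg]
        · rintro ⟨-, hall⟩
          refine hall n ⟨?_, ?_⟩ <;> rw [hb_sum]
          · exact i.isLt
          · omega
        · intro m _
          show (if ((m : ℕ) = (i : ℕ) + 1 ∧ _) then (1:ℂ) else 0) * _ = 0
          rw [if_neg, zero_mul]
          rintro ⟨hv, -⟩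
          exact absurd (hv ▸ m.isLt) (by omega)

/-- Dimension of the kernel of a matrix whose action reads off a subfamily of coordinates. -/
lemma RBB.ker_dim_of_coord (n : ℕ) (A : Matrix (Fin n) (Fin n) ℂ)
    (C : Fin n → Prop) (e : {i // C i} → Fin n) (he : Function.Injective e)
    (hA : ∀ (v : Fin n → ℂ) (i : Fin n),
      (A.mulVec v) i = if h : C i then v (e ⟨i, h⟩) else 0) :
    finrank ℂ (LinearMap.ker A.mulVecLin) = n - Fintype.card {i // C i} := by
  have hker : LinearMap.ker A.mulVecLin = LinearMap.ker (LinearMap.funLeft ℂ ℂ e) := by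
    ext v
    simp only [LinearMap.mem_ker, Matrix.mulVecLin_apply]
    constructor
    · intro hv
      funext t
      have := congrFun hv t.1
      rw [hA v t.1, dif_pos t.2] at this
      simpa [LinearMap.funLeft] using this
    · intro hv
      funext i
      rw [hA v i]
      split
      · next h =>
        have := congrFun hv ⟨i, h⟩
        simpa [LinearMap.funLeft] using this
      · rfl
  rw [hker]
  have hsurj : Function.Surjective (LinearMap.funLeft ℂ ℂ e) :=
    LinearMap.funLeft_surjective_of_injective ℂ ℂ e he
  have h1 := LinearMap.finrank_range_add_finrank_ker (LinearMap.funLeft ℂ ℂ e)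
  rw [LinearMap.range_eq_top.2 hsurj, finrank_top, Module.finrank_fintype_fun_eq_card,
    Module.finrank_fintype_fun_eq_card, Fintype.card_fin] at h1
  omega

/-- The action of the block bidiagonal matrix on a vector. -/
lemma RBB.blockBidiag_mulVec (n s : ℕ) (x : Matrix (Fin n) (Fin n) ℂ)
    (v : Fin s × Fin n → ℂ) (i : Fin s) (m : Fin n) :
    ((blockBidiag n s x).mulVec v) (i, m)
      = x.mulVec (fun l => v (i, l)) m
        + (if h : (i : ℕ) + 1 < s then v (⟨(i : ℕ) + 1, h⟩, m) else 0) := by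
  rw [Matrix.mulVec, dotProduct, Fintype.sum_prod_type]
  have hsplit : ∀ j : Fin s,
      (∑ l, blockBidiag n s x (i, m) (j, l) * v (j, l))
        = (if j = i then x.mulVec (fun l => v (i, l)) m else 0)
          + (if (j : ℕ) = (i : ℕ) + 1 then v (j, m) else 0) := by
    intro j
    by_cases hji : j = i
    · subst hji
      rw [if_pos rfl, if_neg (by omega), add_zero]
      rw [Matrix.mulVec, dotProduct]
      refine Finset.sum_congr rfl fun l _ => ?_
      simp [blockBidiag]
    · rw [if_neg hji]
      by_cases hj1 : (j : ℕ) = (i : ℕ) + 1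
      · rw [if_pos hj1, zero_add]
        have : ∀ l, blockBidiag n s x (i, m) (j, l) = if m = l then 1 else 0 := by
          intro l
          simp only [blockBidiag, Matrix.of_apply]
          rw [if_neg hji, if_pos hj1]
        simp only [this, ite_mul, one_mul, zero_mul]
        rw [Finset.sum_ite_eq]
        simp
      · rw [if_neg hj1, add_zero]
        apply Finset.sum_eq_zero
        intro l _
        simp only [blockBidiag, Matrix.of_apply]
        rw [if_neg hji, if_neg hj1, zero_mul]
  rw [Finset.sum_congr rfl (fun j _ => hsplit j), Finset.sum_add_distrib]
  congr 1
  · rw [Finset.sum_ite_eq' Finset.univ i]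
    simp
  · by_cases h : (i : ℕ) + 1 < s
    · rw [dif_pos h, Finset.sum_eq_single (⟨(i : ℕ) + 1, h⟩ : Fin s)]
      · rw [if_pos rfl]
      · intro j _ hj
        rw [if_neg (fun hc => hj (Fin.ext hc))]
      · intro h'
        exact absurd (Finset.mem_univ _) h'
    · rw [dif_neg h]
      apply Finset.sum_eq_zero
      intro j _
      rw [if_neg]
      intro hc
      exact h (hc ▸ j.isLt)

/-- The kernel of the block bidiagonal matrix has the same dimension as the kernel of `x ^ s`. -/
lemma RBB.finrank_ker_blockBidiag (n s : ℕ) (hs : 1 ≤ s) (x : Matrix (Fin n) (Fin n) ℂ) :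
    finrank ℂ (LinearMap.ker (blockBidiag n s x).mulVecLin)
      = finrank ℂ (LinearMap.ker (x ^ s).mulVecLin) := by
  set M := blockBidiag n s x with hM
  have h0 : (0 : ℕ) < s := hs
  set F : ((Fin s × Fin n → ℂ) →ₗ[ℂ] (Fin n → ℂ)) :=
    LinearMap.funLeft ℂ ℂ (fun m => ((⟨0, h0⟩ : Fin s), m)) with hF
  set G : ((Fin n → ℂ) →ₗ[ℂ] (Fin s × Fin n → ℂ)) :=
    LinearMap.pi (fun p => (LinearMap.proj p.2).comp ((-x) ^ (p.1 : ℕ)).mulVecLin) with hG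
  have hFapply : ∀ v (m : Fin n), F v m = v (⟨0, h0⟩, m) := fun v m => rfl
  have hGapply : ∀ w (p : Fin s × Fin n), G w p = ((-x) ^ (p.1 : ℕ)).mulVec w p.2 :=
    fun w p => rfl
  have hkerM : ∀ v, v ∈ LinearMap.ker M.mulVecLin ↔
      ∀ (i : Fin s) (m : Fin n),
        x.mulVec (fun l => v (i, l)) m
          + (if h : (i : ℕ) + 1 < s then v (⟨(i : ℕ) + 1, h⟩, m) else 0) = 0 := by
    intro v
    rw [LinearMap.mem_ker, Matrix.mulVecLin_apply]
    constructor
    · intro hv i m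
      rw [← RBB.blockBidiag_mulVec n s x v i m, ← hM, hv]
      rfl
    · intro hv
      funext p
      obtain ⟨i, m⟩ := p
      show M.mulVec v (i, m) = 0
      rw [hM, RBB.blockBidiag_mulVec n s x v i m]
      exact hv i m
  have hlayer : ∀ v, v ∈ LinearMap.ker M.mulVecLin →
      ∀ (c : ℕ) (hc : c < s),
        (fun m => v (⟨c, hc⟩, m)) = ((-x) ^ c).mulVec (fun m => v (⟨0, h0⟩, m)) := by
    intro v hv
    intro c
    induction c with
    | zero => intro hc; simp [Matrix.one_mulVec]
    | succ c ihc =>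
      intro hc
      have hcs : c < s := by omega
      have hrel := (hkerM v).1 hv ⟨c, hcs⟩
      funext m
      have := hrel m
      rw [dif_pos (show (⟨c, hcs⟩ : Fin s).1 + 1 < s from hc)] at this
      simp only [Fin.val_mk] at this
      have hv1 : v (⟨c + 1, hc⟩, m) = - x.mulVec (fun l => v (⟨c, hcs⟩, l)) m := by
        linear_combination this
      rw [hv1, ihc hcs]
      rw [pow_succ']
      rw [← Matrix.mulVec_mulVec, Matrix.neg_mulVec]
      simp
  have hFker : ∀ v ∈ LinearMap.ker M.mulVecLin, F v ∈ LinearMap.ker (x ^ s).mulVecLin := by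
    intro v hv
    rw [LinearMap.mem_ker, Matrix.mulVecLin_apply]
    have hcs : s - 1 < s := by omega
    have hrel := (hkerM v).1 hv ⟨s - 1, hcs⟩
    have hlast : x.mulVec (fun l => v (⟨s - 1, hcs⟩, l)) = 0 := by
      funext m
      have := hrel m
      rw [dif_neg (by simp; omega)] at this
      simpa using this
    rw [hlayer v hv (s - 1) hcs] at hlast
    have : x.mulVec (((-x) ^ (s - 1)).mulVec (F v)) = 0 := hlast
    rw [Matrix.mulVec_mulVec] at this
    have hxs : x * (-x) ^ (s - 1) = ((-1 : ℂ) ^ (s - 1)) • (x ^ s) := by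
      have hneg : (-x) = ((-1 : ℂ)) • x := by simp
      rw [hneg, smul_pow, mul_smul_comm]
      congr 1
      rw [← pow_succ']
      congr 1
      omega
    rw [hxs, Matrix.smul_mulVec] at this
    have hne : ((-1 : ℂ) ^ (s - 1)) ≠ 0 := by
      apply pow_ne_zero; norm_num
    exact (smul_eq_zero.1 this).resolve_left hne
  have hGker : ∀ w ∈ LinearMap.ker (x ^ s).mulVecLin, G w ∈ LinearMap.ker M.mulVecLin := by
    intro w hw
    rw [LinearMap.mem_ker, Matrix.mulVecLin_apply] at hw
    rw [hkerM]
    intro i m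
    simp only [hGapply]
    by_cases h : (i : ℕ) + 1 < s
    · rw [dif_pos h]
      show x.mulVec (fun l => ((-x) ^ (i : ℕ)).mulVec w l) m + ((-x) ^ ((i : ℕ) + 1)).mulVec w m = 0
      rw [pow_succ', ← Matrix.mulVec_mulVec, Matrix.neg_mulVec]
      show x.mulVec (((-x) ^ (i : ℕ)).mulVec w) m + (-(x.mulVec (((-x) ^ (i : ℕ)).mulVec w))) m = 0
      simp
    · rw [dif_neg h]
      have his : (i : ℕ) = s - 1 := by have := i.isLt; omega
      show x.mulVec (((-x) ^ (i : ℕ)).mulVec w) m + 0 = 0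
      rw [Matrix.mulVec_mulVec]
      have hxs : x * (-x) ^ (i : ℕ) = ((-1 : ℂ) ^ (i : ℕ)) • (x ^ s) := by
        have hneg : (-x) = ((-1 : ℂ)) • x := by simp
        rw [hneg, smul_pow, mul_smul_comm]
        congr 1
        rw [← pow_succ']
        congr 1
        omega
      rw [hxs, Matrix.smul_mulVec, hw]
      simp
  let f := F.restrict hFker
  let g := G.restrict hGker
  have hfg : ∀ w, f (g w) = w := by
    rintro ⟨w, hw⟩
    apply Subtype.ext
    funext m
    show F (G w) m = w m
    rw [hFapply, hGapply]
    simp [Matrix.one_mulVec]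
  have hgf : ∀ v, g (f v) = v := by
    rintro ⟨v, hv⟩
    apply Subtype.ext
    funext p
    obtain ⟨i, m⟩ := p
    show G (F v) (i, m) = v (i, m)
    rw [hGapply]
    have := congrFun (hlayer v hv (i : ℕ) i.isLt) m
    simp only [Fin.eta] at this
    rw [this]
    rfl
  have hequiv : (LinearMap.ker M.mulVecLin) ≃ₗ[ℂ] (LinearMap.ker (x ^ s).mulVecLin) :=
    LinearEquiv.ofLinear f g (LinearMap.ext hfg) (LinearMap.ext hgf)
  exact hequiv.finrank_eq

/-- Let `x` be an `n×n` complex nilpotent matrix of Jordan type the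
partition `[b_1,…,b_n]` of `n`.  Then for every `s ≥ 1`, the rank of the `sn × sn`
block upper bidiagonal matrix with diagonal blocks `x` and identity superdiagonal blocks
equals `sn − Σ_j min(b_j, s)`. -/
theorem rank_block_bidiag (n : ℕ) (b : ℕ → ℕ)
    (hb_dec : ∀ i j, i ≤ j → b j ≤ b i)
    (hb_zero : ∀ i, n ≤ i → b i = 0)
    (hb_sum : ∑ i ∈ Finset.range n, b i = n)
    (x : Matrix (Fin n) (Fin n) ℂ)
    (hx : ∃ P : Matrix (Fin n) (Fin n) ℂ, IsUnit P.det ∧ x = P * jordanMat n b * P⁻¹) :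
    ∀ s : ℕ, 1 ≤ s →
      (blockBidiag n s x).rank = s * n - ∑ j ∈ Finset.range n, min (b j) s := by
  obtain ⟨P, hP, hxP⟩ := hx
  intro s hs
  set J := jordanMat n b with hJ
  -- conjugation of powers
  have hconj : ∀ t : ℕ, x ^ t = P * J ^ t * P⁻¹ := by
    intro t
    induction t with
    | zero => simp [Matrix.mul_nonsing_inv P hP]
    | succ t iht =>
      have h1 : P⁻¹ * P = 1 := Matrix.nonsing_inv_mul P hP
      rw [pow_succ, iht, hxP, pow_succ]
      have hstep : P * J ^ t * P⁻¹ * (P * J * P⁻¹)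
          = P * J ^ t * (P⁻¹ * P) * (J * P⁻¹) := by
        simp only [Matrix.mul_assoc]
      rw [hstep, h1, Matrix.mul_one]
      simp only [Matrix.mul_assoc]
  -- rank of x^s equals rank of J^s
  have hrank : (x ^ s).rank = (J ^ s).rank := by
    apply le_antisymm
    · rw [hconj s, Matrix.mul_assoc]
      exact le_trans (Matrix.rank_mul_le_right P (J ^ s * P⁻¹))
        (Matrix.rank_mul_le_left (J ^ s) P⁻¹)
    · have hJs : J ^ s = P⁻¹ * x ^ s * P := by
        rw [hconj s]
        have h1 : P⁻¹ * P = 1 := Matrix.nonsing_inv_mul P hP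
        have hstep : P⁻¹ * (P * J ^ s * P⁻¹) * P = P⁻¹ * P * J ^ s * (P⁻¹ * P) := by
          simp only [Matrix.mul_assoc]
        rw [hstep, h1, Matrix.one_mul, Matrix.mul_one]
      rw [hJs, Matrix.mul_assoc]
      exact le_trans (Matrix.rank_mul_le_right P⁻¹ (x ^ s * P))
        (Matrix.rank_mul_le_left (x ^ s) P)
  -- rank-nullity for n×n matrices
  have hrn : ∀ A : Matrix (Fin n) (Fin n) ℂ,
      A.rank + finrank ℂ (LinearMap.ker A.mulVecLin) = n := by
    intro A
    have := LinearMap.finrank_range_add_finrank_ker A.mulVecLin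
    rwa [Module.finrank_fintype_fun_eq_card, Fintype.card_fin] at this
  -- rank-nullity for the big matrix
  have hrnM : (blockBidiag n s x).rank
      + finrank ℂ (LinearMap.ker (blockBidiag n s x).mulVecLin) = s * n := by
    have := LinearMap.finrank_range_add_finrank_ker (blockBidiag n s x).mulVecLin
    rwa [Module.finrank_fintype_fun_eq_card, Fintype.card_prod, Fintype.card_fin,
      Fintype.card_fin] at this
  -- kernel dimension of J^s
  set C : Fin n → Prop := fun i =>
    ∀ k, ¬((i : ℕ) < ∑ l ∈ Finset.range k, b l ∧ ∑ l ∈ Finset.range k, b l ≤ (i : ℕ) + s)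
    with hC
  have hlt : ∀ (i : Fin n), C i → (i : ℕ) + s < n := by
    intro i hi
    have := hi n
    rw [hb_sum] at this
    have h1 : (i : ℕ) < n := i.isLt
    omega
  have hJker : finrank ℂ (LinearMap.ker ((J ^ s)).mulVecLin)
      = n - Fintype.card {i // C i} := by
    apply RBB.ker_dim_of_coord n (J ^ s) C (fun t => ⟨(t.1 : ℕ) + s, hlt t.1 t.2⟩)
    · intro t t' h
      have : (t.1 : ℕ) + s = (t'.1 : ℕ) + s := congrArg Fin.val h
      exact Subtype.ext (Fin.ext (by omega))
    · intro v i
      rw [Matrix.mulVec, dotProduct]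
      by_cases h : C i
      · rw [dif_pos h, Finset.sum_eq_single (⟨(i : ℕ) + s, hlt i h⟩ : Fin n)]
        · rw [RBB.jordan_pow_apply n b hb_sum s hs, if_pos ⟨rfl, h⟩, one_mul]
        · intro j _ hj
          rw [RBB.jordan_pow_apply n b hb_sum s hs, if_neg, zero_mul]
          rintro ⟨hv, -⟩
          exact hj (Fin.ext hv)
        · intro h'
          exact absurd (Finset.mem_univ _) h'
      · rw [dif_neg h]
        apply Finset.sum_eq_zero
        intro j _
        rw [RBB.jordan_pow_apply n b hb_sum s hs, if_neg, zero_mul]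
        rintro ⟨-, hall⟩
        exact h hall
  -- counting
  have hcard : Fintype.card {i : Fin n // ¬ C i} = ∑ j ∈ Finset.range n, min (b j) s := by
    rw [Fintype.card_subtype]
    rw [← RBB.count_lemma n s b hb_zero hb_sum]
    apply Finset.card_bij (fun (i : Fin n) _ => (i : ℕ))
    · intro a ha
      simp only [Finset.mem_filter, Finset.mem_univ, true_and] at ha
      simp only [Finset.mem_filter, Finset.mem_range]
      refine ⟨a.isLt, ?_⟩
      obtain ⟨k, hk⟩ := not_forall.1 ha
      exact ⟨k, not_not.1 hk⟩
    · intro a _ a' _ h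
      exact Fin.ext h
    · intro c hc
      simp only [Finset.mem_filter, Finset.mem_range] at hc
      refine ⟨⟨c, hc.1⟩, ?_, rfl⟩
      simp only [Finset.mem_filter, Finset.mem_univ, true_and]
      intro hCc
      obtain ⟨k, hk1, hk2⟩ := hc.2
      exact hCc k ⟨hk1, hk2⟩
  have hcompl : Fintype.card {i : Fin n // ¬ C i}
      = n - Fintype.card {i : Fin n // C i} := by
    rw [Fintype.card_subtype_compl, Fintype.card_fin]
  have hle : Fintype.card {i : Fin n // C i} ≤ n := by
    simpa using Fintype.card_subtype_le C
  -- assemble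
  have h2 := RBB.finrank_ker_blockBidiag n s hs x
  have h3 := hrn (x ^ s)
  have h4 := hrn (J ^ s)
  omega

end
end
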